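/- For every integer d ≥ 2, the average effective resistance of the d-dimensional hypercube satisfies (1/2)·(1/(d+1)) ≤ R_ave(Q_d) ≤ 2/(d+1). -/

import Mathlib

open Real Finset

/-- Average effective resistance of the `d`-dimensional hypercube `Q_d`. -/
noncomputable def RaveHyp (d : ℕ) : ℝ :=
  (1 / 2 ^ d) * ∑ m ∈ Finset.Icc 1 d, (1 / (2 * (m : ℝ))) * (d.choose m)

/-!
Absorbing `1 / (m + 1)` into the binomial coefficient via
`(n + 1) * C(n, m) = (m + 1) * C(n + 1, m + 1)` gives
`∑_{m=1}^{n} C(n, m) / (m + 1) = (2^(n+1) - n - 2) / (n + 1)`. Since `1 / (2m)` lies between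
`1 / (2(m + 1))` and `1 / (m + 1)` for `m ≥ 1`, the average resistance is within a factor two of
`2^(-d) (2^(d+1) - d - 2) / (d + 1)`, and `d + 2 ≤ 2^d` for `d ≥ 2` gives both bounds.
-/

lemma Nat.add_two_le_two_pow {n : ℕ} (hn : 2 ≤ n) : n + 2 ≤ 2 ^ n := by
  induction n, hn using Nat.le_induction with
  | base => norm_num
  | succ n hn ih => rw [pow_succ]; omega

lemma sum_range_choose_div_add_one {K : Type*} [Field K] [CharZero K] (n : ℕ) :
    ∑ m ∈ range (n + 1), (n.choose m : K) / (m + 1) = (2 ^ (n + 1) - 1) / (n + 1) := by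
  have hterm (m : ℕ) : (n.choose m : K) / (m + 1) = (n + 1).choose (m + 1) / (n + 1) := by
    rw [div_eq_div_iff (Nat.cast_add_one_ne_zero m) (Nat.cast_add_one_ne_zero n), mul_comm]
    exact_mod_cast Nat.add_one_mul_choose_eq n m
  have hsum : ∑ m ∈ range (n + 1), ((n + 1).choose (m + 1) : K) = 2 ^ (n + 1) - 1 := by
    rw [eq_sub_iff_add_eq]
    exact_mod_cast by simpa [sum_range_succ'] using Nat.sum_range_choose (n + 1)
  simp_rw [hterm, ← sum_div, hsum]

lemma sum_Icc_choose_div_add_one {K : Type*} [Field K] [CharZero K] (n : ℕ) :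
    ∑ m ∈ Icc 1 n, (n.choose m : K) / (m + 1) = (2 ^ (n + 1) - n - 2) / (n + 1) := by
  have h := sum_range_choose_div_add_one (K := K) n
  rw [range_eq_Ico, sum_eq_sum_Ico_succ_bot (show 0 < n + 1 by omega), zero_add,
    Ico_add_one_right_eq_Icc] at h
  rw [eq_div_iff (Nat.cast_add_one_ne_zero n)] at h ⊢
  push_cast [Nat.choose_zero_right] at h
  linear_combination h

lemma sum_Icc_one_div_two_mul_mul_choose_bounds (n : ℕ) :
    (2 ^ (n + 1) - n - 2) / (n + 1) / 2 ≤ ∑ m ∈ Icc 1 n, 1 / (2 * (m : ℝ)) * n.choose m ∧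
      ∑ m ∈ Icc 1 n, 1 / (2 * (m : ℝ)) * n.choose m ≤ (2 ^ (n + 1) - n - 2) / (n + 1) := by
  rw [← sum_Icc_choose_div_add_one, sum_div]
  refine ⟨sum_le_sum fun m hm => ?_, sum_le_sum fun m hm => ?_⟩
  all_goals
    have hm : (1 : ℝ) ≤ m := by exact_mod_cast (mem_Icc.mp hm).1
    have hc : (0 : ℝ) ≤ n.choose m := by positivity
    rw [one_div_mul_eq_div]
  · rw [div_div, mul_comm (m + 1 : ℝ)]
    exact div_le_div_of_nonneg_left hc (by positivity) (by linarith)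
  · exact div_le_div_of_nonneg_left hc (by positivity) (by linarith)

theorem hypercube_bounds (d : ℕ) (hd : 2 ≤ d) :
    (1 / 2) * (1 / ((d : ℝ) + 1)) ≤ RaveHyp d ∧ RaveHyp d ≤ 2 / ((d : ℝ) + 1) := by
  obtain ⟨hlow, hup⟩ := sum_Icc_one_div_two_mul_mul_choose_bounds d
  have hpow : (d : ℝ) + 2 ≤ 2 ^ d := by exact_mod_cast Nat.add_two_le_two_pow hd
  rw [RaveHyp, one_div_mul_eq_div (2 ^ d : ℝ)]
  constructor
  · refine le_trans ?_ (div_le_div_of_nonneg_right hlow (by positivity))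
    rw [div_div, div_div, one_div_mul_one_div, div_le_div_iff₀ (by positivity) (by positivity),
      pow_succ]
    nlinarith
  · refine (div_le_div_of_nonneg_right hup (by positivity)).trans ?_
    rw [div_div, div_le_div_iff₀ (by positivity) (by positivity), pow_succ]
    nlinarith
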